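/- Let K be a field, let A be a configuration in K[t_1,…,t_d], and for each i = 1,…,d let B_i = {m_1^{(i)},…,m_{λ_i}^{(i)}} be a configuration in a polynomial ring K[u^{(i)}], where the variable sets u^{(1)},…,u^{(d)} are pairwise disjoint. For every monomial M of K[u^{(1)},…,u^{(d)}] in the nested configuration A(B_1,…,B_d), fix an expression M = m_{j_1}^{(i_1)}⋯m_{j_r}^{(i_r)} with t_{i_1}⋯t_{i_r} ∈ A, and let φ_j (j = 1,…,d) be the associated K-algebra maps φ_j(x_M) = ∏_{k : i_k = j} z_{j_k}^{(j)} and π_j(z_k^{(j)}) = m_k^{(j)}. Then for every monomial x^α in K[x_M : M ∈ A(B_1,…,B_d)], the image π(x^α) factors as π(x^α) = ∏_{j=1}^d π_j(φ_j(x^α)), where for each j the factor π_j(φ_j(x^α)) is a monomial lying in K[u^{(j)}]; consequently, for monomials x^α, x^β one has π(x^α) = π(x^β) if and only if π_j(φ_j(x^α)) = π_j(φ_j(x^β)) for all j = 1,…,d. -/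

import Mathlib

open MvPolynomial

/-- Total degree of an exponent vector. -/
def expDeg {σ : Type*} (a : σ →₀ ℕ) : ℕ := a.sum fun _ e => e

/-- A set of monomials (given by exponent vectors) is a configuration if some nonnegative
weight vector gives every member weight `1`. -/
def IsConfig {σ : Type*} (A : Set (σ →₀ ℕ)) : Prop :=
  ∃ w : σ → ℝ, (∀ i, 0 ≤ w i) ∧ ∀ a ∈ A, (a.sum fun i e => w i * (e : ℝ)) = 1

/-- The `K`-algebra homomorphism sending the variable indexed by `s` to the monomial with
exponent vector `v s`. -/
noncomputable def toricHom (K : Type*) [Field K] {σ τ : Type*} (v : σ → (τ →₀ ℕ)) :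
    MvPolynomial σ K →ₐ[K] MvPolynomial τ K :=
  MvPolynomial.aeval fun s => MvPolynomial.monomial (v s) (1 : K)

/-- The toric ideal of a family of monomials (given by exponent vectors). -/
noncomputable def toricIdeal (K : Type*) [Field K] {σ τ : Type*} (v : σ → (τ →₀ ℕ)) :
    Ideal (MvPolynomial σ K) :=
  RingHom.ker (toricHom K v)

/-- `r` is a monomial order: a linear order, compatible with addition, with `0` least. -/
def IsMonomialOrder {σ : Type*} (r : (σ →₀ ℕ) → (σ →₀ ℕ) → Prop) : Prop :=
  IsLinearOrder (σ →₀ ℕ) r ∧ (∀ a, r 0 a) ∧ ∀ a b c, r a b → r (a + c) (b + c)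

/-- `m` is the leading monomial (exponent) of `f` with respect to the monomial order `r`. -/
def IsLeadingMonomial {σ K : Type*} [CommSemiring K]
    (r : (σ →₀ ℕ) → (σ →₀ ℕ) → Prop) (f : MvPolynomial σ K) (m : σ →₀ ℕ) : Prop :=
  m ∈ f.support ∧ ∀ m' ∈ f.support, r m' m

/-- `G` is a Gröbner basis of `I` w.r.t. `r`: `G ⊆ I` and the leading monomial of every
nonzero element of `I` is divisible by the leading monomial of some element of `G`. -/
def IsGroebnerBasis {σ K : Type*} [Field K] (r : (σ →₀ ℕ) → (σ →₀ ℕ) → Prop)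
    (I : Ideal (MvPolynomial σ K)) (G : Set (MvPolynomial σ K)) : Prop :=
  (∀ g ∈ G, g ∈ I) ∧
  ∀ f ∈ I, f ≠ 0 → ∀ mf, IsLeadingMonomial r f mf →
    ∃ g ∈ G, ∃ mg, IsLeadingMonomial r g mg ∧ mg ≤ mf

/-- `G` is the reduced Gröbner basis: a Gröbner basis, leading coefficients `1`, and no
monomial of an element is divisible by the leading monomial of another element. -/
def IsReducedGroebnerBasis {σ K : Type*} [Field K] (r : (σ →₀ ℕ) → (σ →₀ ℕ) → Prop)
    (I : Ideal (MvPolynomial σ K)) (G : Set (MvPolynomial σ K)) : Prop :=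
  IsGroebnerBasis r I G ∧
  (∀ g ∈ G, ∀ m, IsLeadingMonomial r g m → MvPolynomial.coeff m g = 1) ∧
  ∀ g ∈ G, ∀ g' ∈ G, g' ≠ g → ∀ m ∈ g.support, ∀ m', IsLeadingMonomial r g' m' → ¬ m' ≤ m

/-- A homogeneous binomial of degree 2, i.e. a difference of two distinct quadratic monomials. -/
def IsQuadBinomial {σ K : Type*} [CommRing K] (f : MvPolynomial σ K) : Prop :=
  ∃ a b : σ →₀ ℕ, a ≠ b ∧ expDeg a = 2 ∧ expDeg b = 2 ∧
    f = MvPolynomial.monomial a (1 : K) - MvPolynomial.monomial b (1 : K)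

/-- `I` possesses a quadratic Gröbner basis. -/
def HasQuadraticGB {σ K : Type*} [Field K] (I : Ideal (MvPolynomial σ K)) : Prop :=
  ∃ r, IsMonomialOrder r ∧ ∃ G, (∀ g ∈ G, IsQuadBinomial g) ∧ IsGroebnerBasis r I G

/-- The initial ideal of `I` w.r.t. `r`: ideal generated by the leading monomials of the
nonzero elements of `I`. -/
noncomputable def initialIdeal {σ K : Type*} [Field K] (r : (σ →₀ ℕ) → (σ →₀ ℕ) → Prop)
    (I : Ideal (MvPolynomial σ K)) : Ideal (MvPolynomial σ K) :=
  Ideal.span {p | ∃ f ∈ I, f ≠ 0 ∧ ∃ m, IsLeadingMonomial r f m ∧ p = MvPolynomial.monomial m (1 : K)}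

/-- A squarefree exponent vector. -/
def SquarefreeExp {σ : Type*} (m : σ →₀ ℕ) : Prop := ∀ i, m i ≤ 1

/-- The nested configuration `A(B_1, …, B_d)`. -/
def NestedConfig {d : ℕ} {lam mu : Fin d → ℕ} (A : Set (Fin d →₀ ℕ))
    (B : (i : Fin d) → Fin (lam i) → (Fin (mu i) →₀ ℕ)) :
    Set ((Σ i : Fin d, Fin (mu i)) →₀ ℕ) :=
  { M | ∃ n : ℕ, 1 ≤ n ∧ ∃ s : Fin n → Σ i : Fin d, Fin (lam i),
      (∑ k, Finsupp.single (s k).1 1) ∈ A ∧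
      M = ∑ k, Finsupp.mapDomain (Sigma.mk (s k).1) (B (s k).1 (s k).2) }

/-- The exponent vector of `φ_j(x_M)` determined by the chosen standard expressions. -/
noncomputable def phiExp {d : ℕ} {lam mu : Fin d → ℕ} {A : Set (Fin d →₀ ℕ)}
    {B : (i : Fin d) → Fin (lam i) → (Fin (mu i) →₀ ℕ)}
    (n : ↥(NestedConfig A B) → ℕ)
    (s : (M : ↥(NestedConfig A B)) → Fin (n M) → Σ i : Fin d, Fin (lam i))
    (j : Fin d) (M : ↥(NestedConfig A B)) : Fin (lam j) →₀ ℕ :=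
  ∑ k : Fin (n M), if h : (s M k).1 = j
    then Finsupp.single (Fin.cast (congrArg lam h) (s M k).2) 1 else 0

/-! By its fixed expression, each generator `M` of the nested configuration is a sum of the
exponent vectors `B_{i_k}(j_k)`, each placed in the block of variables `u^{(i_k)}`. Grouping these
summands by block writes the exponent of `π(x^α)` as the juxtaposition, over `j`, of the exponents
of `π_j(φ_j(x^α))`; as the blocks of variables are disjoint, two such exponents agree iff all their
blocks do. -/

section ToricHom

variable {K : Type*} [Field K] {σ τ ρ : Type*}

theorem toricHom_X (v : σ → τ →₀ ℕ) (x : σ) : toricHom K v (X x) = monomial (v x) 1 :=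
  aeval_X _ _

theorem toricHom_monomial_one (v : σ → τ →₀ ℕ) (α : σ →₀ ℕ) :
    toricHom K v (monomial α 1) = monomial (Finsupp.linearCombination ℕ v α) 1 := by
  rw [toricHom, aeval_monomial, map_one, one_mul, Finsupp.linearCombination_apply, Finsupp.sum,
    monomial_sum_one]
  simp only [monomial_pow, one_pow, Finsupp.prod]

theorem toricHom_toricHom (v : σ → τ →₀ ℕ) (w : τ → ρ →₀ ℕ) (p : MvPolynomial σ K) :
    toricHom K w (toricHom K v p) = toricHom K (fun x => Finsupp.linearCombination ℕ w (v x)) p :=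
  AlgHom.congr_fun (φ₁ := (toricHom K w).comp (toricHom K v)) (φ₂ := toricHom K _)
    (algHom_ext fun x => by
      rw [AlgHom.comp_apply, toricHom_X, toricHom_X, toricHom_monomial_one]) p

theorem rename_toricHom (f : τ → ρ) (v : σ → τ →₀ ℕ) (p : MvPolynomial σ K) :
    rename f (toricHom K v p) = toricHom K (fun x => Finsupp.mapDomain f (v x)) p :=
  AlgHom.congr_fun (φ₁ := (rename f).comp (toricHom K v)) (φ₂ := toricHom K _)
    (algHom_ext fun x => by rw [AlgHom.comp_apply, toricHom_X, toricHom_X, rename_monomial]) p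

theorem prod_toricHom_monomial_one {ι : Type*} (S : Finset ι) (v : ι → σ → τ →₀ ℕ)
    (α : σ →₀ ℕ) :
    ∏ i ∈ S, toricHom K (v i) (monomial α 1) = toricHom K (∑ i ∈ S, v i) (monomial α 1) := by
  simp only [toricHom_monomial_one, ← monomial_sum_one, Finsupp.linearCombination_apply,
    Finsupp.sum, Finset.sum_apply, Finset.smul_sum]
  rw [Finset.sum_comm]

end ToricHom

section Blocks

variable {ι : Type*} [Fintype ι] {κ : ι → Type*}

theorem Finsupp.sum_mapDomain_sigmaMk_apply {M : Type*} [AddCommMonoid M]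
    (f : ∀ i, κ i →₀ M) (i : ι) (x : κ i) :
    (∑ j, Finsupp.mapDomain (Sigma.mk j) (f j)) ⟨i, x⟩ = f i x := by
  rw [Finsupp.finsetSum_apply, Finset.sum_eq_single i]
  · exact Finsupp.mapDomain_apply sigma_mk_injective _ _
  · rintro j - hji
    exact Finsupp.mapDomain_of_notMem_range _ _ fun ⟨y, hy⟩ => hji (congrArg Sigma.fst hy)
  · exact fun h => absurd (Finset.mem_univ i) h

theorem prod_rename_sigmaMk_monomial_one_injective (R : Type*) [CommSemiring R]
    [Nontrivial R] :
    Function.Injective fun f : ∀ i, κ i →₀ ℕ =>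
      ∏ i, rename (Sigma.mk i) (monomial (f i) (1 : R)) := by
  intro f g hfg
  simp only [rename_monomial, ← monomial_sum_one] at hfg
  have hsum := monomial_left_injective one_ne_zero hfg
  funext i
  ext x
  simpa only [Finsupp.sum_mapDomain_sigmaMk_apply] using DFunLike.congr_fun hsum ⟨i, x⟩

variable [DecidableEq ι] {lam : ι → ℕ} (B : ∀ i, Fin (lam i) → κ i →₀ ℕ)

theorem mapDomain_sigmaMk_eq_sum (p : Σ i, Fin (lam i)) :
    Finsupp.mapDomain (Sigma.mk p.1) (B p.1 p.2) =
      ∑ j, Finsupp.mapDomain (Sigma.mk j) (Finsupp.linearCombination ℕ (B j)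
        (if h : p.1 = j then Finsupp.single (Fin.cast (congrArg lam h) p.2) 1 else 0)) := by
  obtain ⟨i, b⟩ := p
  rw [Finset.sum_eq_single i]
  · simp
  · rintro j - hji
    simp [Ne.symm hji]
  · exact fun h => absurd (Finset.mem_univ i) h

theorem sum_mapDomain_sigmaMk_eq_sum {ι' : Type*} (S : Finset ι') (s : ι' → Σ i, Fin (lam i)) :
    ∑ k ∈ S, Finsupp.mapDomain (Sigma.mk (s k).1) (B (s k).1 (s k).2) =
      ∑ j, Finsupp.mapDomain (Sigma.mk j) (Finsupp.linearCombination ℕ (B j)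
        (∑ k ∈ S, if h : (s k).1 = j then Finsupp.single (Fin.cast (congrArg lam h) (s k).2) 1
          else 0)) := by
  simp only [map_sum, Finsupp.mapDomain_finsetSum, mapDomain_sigmaMk_eq_sum B]
  exact Finset.sum_comm

end Blocks

theorem nested_pi_factorization_general
    {K : Type*} [Field K] {d : ℕ} {lam mu : Fin d → ℕ}
    (A : Finset (Fin d →₀ ℕ))
    (B : (i : Fin d) → Fin (lam i) → (Fin (mu i) →₀ ℕ))
    -- a fixed expression `M = m_{j_1}^{(i_1)} ⋯ m_{j_r}^{(i_r)}` for each `M ∈ A(B_1,…,B_d)`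
    (n : ↥(NestedConfig (↑A : Set (Fin d →₀ ℕ)) B) → ℕ)
    (s : (M : ↥(NestedConfig (↑A : Set (Fin d →₀ ℕ)) B)) → Fin (n M) → Σ i : Fin d, Fin (lam i))
    (hsM : ∀ M : ↥(NestedConfig (↑A : Set (Fin d →₀ ℕ)) B),
      (M : (Σ i : Fin d, Fin (mu i)) →₀ ℕ) =
        ∑ k, Finsupp.mapDomain (Sigma.mk (s M k).1) (B (s M k).1 (s M k).2)) :
    (∀ α : (↥(NestedConfig (↑A : Set (Fin d →₀ ℕ)) B)) →₀ ℕ,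
      (toricHom K (fun M : ↥(NestedConfig (↑A : Set (Fin d →₀ ℕ)) B) =>
          (M : (Σ i : Fin d, Fin (mu i)) →₀ ℕ))) (MvPolynomial.monomial α 1) =
        ∏ j : Fin d, MvPolynomial.rename (Sigma.mk j)
          ((toricHom K (B j)) ((toricHom K (phiExp n s j)) (MvPolynomial.monomial α 1))) ∧
      ∀ j : Fin d, ∃ v : Fin (mu j) →₀ ℕ,
        (toricHom K (B j)) ((toricHom K (phiExp n s j)) (MvPolynomial.monomial α 1)) =
          MvPolynomial.monomial v 1) ∧
    ∀ α β : (↥(NestedConfig (↑A : Set (Fin d →₀ ℕ)) B)) →₀ ℕ,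
      ((toricHom K (fun M : ↥(NestedConfig (↑A : Set (Fin d →₀ ℕ)) B) =>
          (M : (Σ i : Fin d, Fin (mu i)) →₀ ℕ))) (MvPolynomial.monomial α 1) =
        (toricHom K (fun M : ↥(NestedConfig (↑A : Set (Fin d →₀ ℕ)) B) =>
          (M : (Σ i : Fin d, Fin (mu i)) →₀ ℕ))) (MvPolynomial.monomial β 1) ↔
        ∀ j : Fin d,
          (toricHom K (B j)) ((toricHom K (phiExp n s j)) (MvPolynomial.monomial α 1)) =
          (toricHom K (B j)) ((toricHom K (phiExp n s j)) (MvPolynomial.monomial β 1))) := by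
  have hblocks : (fun M : ↥(NestedConfig (↑A : Set (Fin d →₀ ℕ)) B) =>
      (M : (Σ i : Fin d, Fin (mu i)) →₀ ℕ)) = ∑ j, fun M =>
        Finsupp.mapDomain (Sigma.mk j) (Finsupp.linearCombination ℕ (B j) (phiExp n s j M)) := by
    funext M
    rw [Finset.sum_apply, hsM M]
    exact sum_mapDomain_sigmaMk_eq_sum B _ (s M)
  have hfactor : ∀ α, toricHom K (fun M : ↥(NestedConfig (↑A : Set (Fin d →₀ ℕ)) B) =>
      (M : (Σ i : Fin d, Fin (mu i)) →₀ ℕ)) (monomial α 1) =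
        ∏ j, rename (Sigma.mk j) (toricHom K (B j) (toricHom K (phiExp n s j) (monomial α 1))) := by
    intro α
    simp only [toricHom_toricHom, rename_toricHom, prod_toricHom_monomial_one, hblocks]
  have hmonomial : ∀ α j, toricHom K (B j) (toricHom K (phiExp n s j) (monomial α 1)) =
      monomial (Finsupp.linearCombination ℕ (fun M => Finsupp.linearCombination ℕ (B j)
        (phiExp n s j M)) α) 1 := by
    intro α j
    rw [toricHom_toricHom, toricHom_monomial_one]
  refine ⟨fun α => ⟨hfactor α, fun j => ⟨_, hmonomial α j⟩⟩,
    fun α β => ⟨fun h j => ?_, fun h => ?_⟩⟩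
  · have hexps := prod_rename_sigmaMk_monomial_one_injective K <| by
      simpa only [hfactor, hmonomial] using h
    rw [hmonomial, hmonomial, congrFun hexps j]
  · simp only [hfactor, h]

/-- for every monomial `x^α` of `K[x_M : M ∈ A(B_1,…,B_d)]`, the image
`π(x^α)` factors as `∏_j π_j(φ_j(x^α))`, each factor being a monomial lying in `K[u^{(j)}]`;
consequently `π(x^α) = π(x^β)` iff `π_j(φ_j(x^α)) = π_j(φ_j(x^β))` for all `j`. -/
theorem nested_pi_factorization
    {K : Type*} [Field K] {d : ℕ} {lam mu : Fin d → ℕ}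
    (A : Finset (Fin d →₀ ℕ))
    (B : (i : Fin d) → Fin (lam i) → (Fin (mu i) →₀ ℕ))
    (hA : IsConfig (↑A : Set (Fin d →₀ ℕ)))
    (hB : ∀ i, IsConfig (Set.range (B i)))
    -- a fixed expression `M = m_{j_1}^{(i_1)} ⋯ m_{j_r}^{(i_r)}` for each `M ∈ A(B_1,…,B_d)`
    (n : ↥(NestedConfig (↑A : Set (Fin d →₀ ℕ)) B) → ℕ)
    (s : (M : ↥(NestedConfig (↑A : Set (Fin d →₀ ℕ)) B)) → Fin (n M) → Σ i : Fin d, Fin (lam i))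
    (hn : ∀ M, 1 ≤ n M)
    (hsA : ∀ M, (∑ k, Finsupp.single (s M k).1 1) ∈ A)
    (hsM : ∀ M : ↥(NestedConfig (↑A : Set (Fin d →₀ ℕ)) B),
      (M : (Σ i : Fin d, Fin (mu i)) →₀ ℕ) =
        ∑ k, Finsupp.mapDomain (Sigma.mk (s M k).1) (B (s M k).1 (s M k).2)) :
    (∀ α : (↥(NestedConfig (↑A : Set (Fin d →₀ ℕ)) B)) →₀ ℕ,
      (toricHom K (fun M : ↥(NestedConfig (↑A : Set (Fin d →₀ ℕ)) B) =>
          (M : (Σ i : Fin d, Fin (mu i)) →₀ ℕ))) (MvPolynomial.monomial α 1) =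
        ∏ j : Fin d, MvPolynomial.rename (Sigma.mk j)
          ((toricHom K (B j)) ((toricHom K (phiExp n s j)) (MvPolynomial.monomial α 1))) ∧
      ∀ j : Fin d, ∃ v : Fin (mu j) →₀ ℕ,
        (toricHom K (B j)) ((toricHom K (phiExp n s j)) (MvPolynomial.monomial α 1)) =
          MvPolynomial.monomial v 1) ∧
    ∀ α β : (↥(NestedConfig (↑A : Set (Fin d →₀ ℕ)) B)) →₀ ℕ,
      ((toricHom K (fun M : ↥(NestedConfig (↑A : Set (Fin d →₀ ℕ)) B) =>
          (M : (Σ i : Fin d, Fin (mu i)) →₀ ℕ))) (MvPolynomial.monomial α 1) =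
        (toricHom K (fun M : ↥(NestedConfig (↑A : Set (Fin d →₀ ℕ)) B) =>
          (M : (Σ i : Fin d, Fin (mu i)) →₀ ℕ))) (MvPolynomial.monomial β 1) ↔
        ∀ j : Fin d,
          (toricHom K (B j)) ((toricHom K (phiExp n s j)) (MvPolynomial.monomial α 1)) =
          (toricHom K (B j)) ((toricHom K (phiExp n s j)) (MvPolynomial.monomial β 1))) :=
  nested_pi_factorization_general A B n s hsM
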